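/- arXiv:1501.00516 — 8 statements merged into one kernel-verified Lean document; each statement's English description precedes it below -/
import Mathlib

section
/- Let G=(V,E) be a locally finite graph without isolated vertices, and for each edge e let t(e) denote the number of triangles of G containing e; set T = max_e t(e) (assumed finite). Then Ric(G) ≤ 2 + T/2; that is, there exist a function f:V→ℝ and a vertex x∈V with Γ₂(f)(x) < K·Γ(f)(x) for every K > 2 + T/2. -/
noncomputable section
open Matrix

/-- The graph Laplacian: `Δ f (x) = Σ_{y ~ x} (f y - f x)`. -/
def lap {V : Type*} (G : SimpleGraph V) (f : V → ℝ) (x : V) : ℝ :=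
  ∑ᶠ y ∈ {y | G.Adj x y}, (f y - f x)

/-- The carré du champ `Γ(f,g)(x) = (1/2) Σ_{y ~ x} (f x - f y)(g x - g y)`. -/
def gam {V : Type*} (G : SimpleGraph V) (f g : V → ℝ) (x : V) : ℝ :=
  (1/2) * ∑ᶠ y ∈ {y | G.Adj x y}, (f x - f y) * (g x - g y)

/-- The iterated carré du champ `Γ₂(f) = (1/2) Δ Γ(f) - Γ(f, Δ f)`. -/
def gam2 {V : Type*} (G : SimpleGraph V) (f : V → ℝ) (x : V) : ℝ :=
  (1/2) * lap G (gam G f f) x - gam G f (lap G f) x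

/-- `Ric(G) ≥ K` : the Bochner inequality `Γ₂(f)(x) ≥ K Γ(f)(x)` holds for all `f, x`. -/
def RicGE {V : Type*} (G : SimpleGraph V) (K : ℝ) : Prop :=
  ∀ (f : V → ℝ) (x : V), K * gam G f f x ≤ gam2 G f x

/-- for a locally finite graph with no isolated vertices, if `T` is the
maximum, over edges `e`, of the number `t(e)` of triangles containing `e`, then
`Ric(G) ≤ 2 + T/2`: there are `f` and `x` violating the Bochner inequality for every
`K > 2 + T/2`. -/
theorem ric_upper_bound {V : Type*} (G : SimpleGraph V)
    (hlf : ∀ x : V, {y | G.Adj x y}.Finite)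
    (hniso : ∀ x : V, ∃ y : V, G.Adj x y)
    (T : ℕ)
    (hT : ∀ x y : V, G.Adj x y → ({z | G.Adj x z ∧ G.Adj y z}.ncard ≤ T))
    (hTmax : ∃ x y : V, G.Adj x y ∧ {z | G.Adj x z ∧ G.Adj y z}.ncard = T) :
    ∃ (f : V → ℝ) (x : V), ∀ K : ℝ, 2 + (T : ℝ) / 2 < K →
      gam2 G f x < K * gam G f f x := by
  classical
  have hfs : ∀ (v : V) (g : V → ℝ),
      ∑ᶠ y ∈ {y | G.Adj v y}, g y = ∑ y ∈ (hlf v).toFinset, g y := by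
    intro v g
    have h : ∑ᶠ y ∈ (((hlf v).toFinset : Finset V) : Set V), g y
        = ∑ y ∈ (hlf v).toFinset, g y := finsum_mem_coe_finset _ _
    rwa [Set.Finite.coe_toFinset] at h
  obtain ⟨x₀, -, -, -⟩ := hTmax
  set D : V → ℕ := fun v => (hlf v).toFinset.card with hDdef
  have hne : (Set.range D).Nonempty := ⟨D x₀, x₀, rfl⟩
  obtain ⟨x, hxval⟩ := Nat.sInf_mem hne
  have hmin : ∀ v, D x ≤ D v := by
    intro v
    rw [hxval]
    exact Nat.sInf_le ⟨v, rfl⟩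
  set f : V → ℝ := fun w => if w = x then 0 else if G.Adj x w then 1 else 2 with hfdef
  refine ⟨f, x, ?_⟩
  intro K hK
  set d : ℕ := (hlf x).toFinset.card with hd
  have hfx : f x = 0 := if_pos rfl
  have hfz : ∀ z, G.Adj x z → f z = 1 := by
    intro z hz
    simp only [hfdef]
    rw [if_neg hz.ne', if_pos hz]
  set e : V → ℕ := fun z =>
    ((hlf z).toFinset.filter (fun w => ¬(w = x ∨ G.Adj x w))).card with he
  have hcx : ∀ z, G.Adj x z → (((hlf z).toFinset).filter (fun w => w = x)).card = 1 := by
    intro z hz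
    have hfe : (hlf z).toFinset.filter (fun w => w = x) = {x} := by
      ext w
      simp only [Finset.mem_filter, Finset.mem_singleton, Set.Finite.mem_toFinset,
        Set.mem_setOf_eq]
      constructor
      · exact fun h => h.2
      · rintro rfl
        exact ⟨hz.symm, rfl⟩
    rw [hfe, Finset.card_singleton]
  -- laplacian at a neighbor z of x
  have hlapz : ∀ z, G.Adj x z → lap G f z = (e z : ℝ) - 1 := by
    intro z hz
    rw [lap, hfs z]
    have hcong : ∀ w ∈ (hlf z).toFinset, f w - f z =
        (if ¬(w = x ∨ G.Adj x w) then (1:ℝ) else 0) - (if w = x then (1:ℝ) else 0) := by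
      intro w _
      rw [hfz z hz]
      by_cases h1 : w = x
      · subst h1
        rw [hfx, if_pos rfl, if_neg (not_not_intro (Or.inl rfl))] <;> norm_num
      · by_cases h2 : G.Adj x w
        · rw [hfz w h2, if_neg h1, if_neg (not_not_intro (Or.inr h2))] <;> norm_num
        · have hfw : f w = 2 := by
            simp only [hfdef]
            rw [if_neg h1, if_neg h2]
          rw [hfw, if_neg h1, if_pos (by tauto)] <;> norm_num
    rw [Finset.sum_congr rfl hcong, Finset.sum_sub_distrib, Finset.sum_boole,
      Finset.sum_boole, hcx z hz]
    simp only [he]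
    push_cast
    ring
  -- gamma at a neighbor z of x
  have hgamz : ∀ z, G.Adj x z → gam G f f z = (1 + (e z : ℝ)) / 2 := by
    intro z hz
    rw [gam, hfs z]
    have hcong : ∀ w ∈ (hlf z).toFinset, (f z - f w) * (f z - f w) =
        (if w = x then (1:ℝ) else 0) + (if ¬(w = x ∨ G.Adj x w) then (1:ℝ) else 0) := by
      intro w _
      rw [hfz z hz]
      by_cases h1 : w = x
      · subst h1
        rw [hfx, if_pos rfl, if_neg (not_not_intro (Or.inl rfl))] <;> norm_num
      · by_cases h2 : G.Adj x w
        · rw [hfz w h2, if_neg h1, if_neg (not_not_intro (Or.inr h2))] <;> norm_num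
        · have hfw : f w = 2 := by
            simp only [hfdef]
            rw [if_neg h1, if_neg h2]
          rw [hfw, if_neg h1, if_pos (by tauto)] <;> norm_num
    rw [Finset.sum_congr rfl hcong, Finset.sum_add_distrib, Finset.sum_boole,
      Finset.sum_boole, hcx z hz]
    simp only [he]
    push_cast
    ring
  -- gamma at x
  have hgamx : gam G f f x = (d : ℝ) / 2 := by
    rw [gam, hfs x]
    have hcong : ∀ z ∈ (hlf x).toFinset, (f x - f z) * (f x - f z) = (1:ℝ) := by
      intro z hzm
      rw [hfx, hfz z ((hlf x).mem_toFinset.mp hzm)]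
      ring
    rw [Finset.sum_congr rfl hcong, Finset.sum_const, nsmul_eq_mul, mul_one]
    ring
  -- laplacian at x
  have hlapx : lap G f x = (d : ℝ) := by
    rw [lap, hfs x]
    have hcong : ∀ z ∈ (hlf x).toFinset, f z - f x = (1:ℝ) := by
      intro z hzm
      rw [hfx, hfz z ((hlf x).mem_toFinset.mp hzm)]
      ring
    rw [Finset.sum_congr rfl hcong, Finset.sum_const, nsmul_eq_mul, mul_one]
  -- gamma2 at x
  have hg2 : gam2 G f x = ∑ z ∈ (hlf x).toFinset, ((3 + (d:ℝ) - (e z : ℝ)) / 4) := by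
    have h1 : lap G (gam G f f) x
        = ∑ z ∈ (hlf x).toFinset, ((1 + (e z : ℝ)) / 2 - (d : ℝ) / 2) := by
      rw [lap, hfs x]
      refine Finset.sum_congr rfl ?_
      intro z hzm
      rw [hgamz z ((hlf x).mem_toFinset.mp hzm), hgamx]
    have h2 : gam G f (lap G f) x
        = (1/2) * ∑ z ∈ (hlf x).toFinset, ((0:ℝ) - 1) * ((d:ℝ) - ((e z : ℝ) - 1)) := by
      rw [gam, hfs x]
      congr 1
      refine Finset.sum_congr rfl ?_
      intro z hzm
      have hz := (hlf x).mem_toFinset.mp hzm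
      rw [hfx, hfz z hz, hlapx, hlapz z hz]
    rw [gam2, h1, h2, Finset.mul_sum, Finset.mul_sum, ← Finset.sum_sub_distrib]
    refine Finset.sum_congr rfl ?_
    intro z _
    ring
  -- per-neighbor counting bound
  have hbound : ∀ z, G.Adj x z → d ≤ e z + 1 + T := by
    intro z hz
    have h1 : d ≤ (hlf z).toFinset.card := hmin z
    have hez : e z = ((hlf z).toFinset.filter (fun w => ¬(w = x ∨ G.Adj x w))).card := rfl
    have hsplit := Finset.card_filter_add_card_filter_not
      (s := (hlf z).toFinset) (p := fun w => w = x ∨ G.Adj x w)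
    have hor : ((hlf z).toFinset.filter (fun w => w = x ∨ G.Adj x w)).card
        ≤ ((hlf z).toFinset.filter (fun w => w = x)).card
          + ((hlf z).toFinset.filter (fun w => G.Adj x w)).card := by
      rw [Finset.filter_or]
      exact Finset.card_union_le _ _
    have hcard1 : ((hlf z).toFinset.filter (fun w => w = x)).card = 1 := hcx z hz
    have hcardT : ((hlf z).toFinset.filter (fun w => G.Adj x w)).card ≤ T := by
      have hset : {w | G.Adj x w ∧ G.Adj z w}
          = ↑((hlf z).toFinset.filter (fun w => G.Adj x w)) := by
        ext w
        simp only [Set.mem_setOf_eq, Finset.coe_filter, Set.Finite.mem_toFinset]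
        tauto
      have hh := hT x z hz
      rwa [hset, Set.ncard_coe_finset] at hh
    omega
  -- degree is positive
  obtain ⟨y, hy⟩ := hniso x
  have hdpos : 0 < d := Finset.card_pos.mpr ⟨y, (hlf x).mem_toFinset.mpr hy⟩
  -- putting it together
  have hsum : gam2 G f x ≤ (2 + (T:ℝ)/2) * ((d:ℝ)/2) := by
    rw [hg2]
    have hle : ∀ z ∈ (hlf x).toFinset,
        (3 + (d:ℝ) - (e z : ℝ)) / 4 ≤ (4 + (T:ℝ)) / 4 := by
      intro z hzm
      have hz := (hlf x).mem_toFinset.mp hzm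
      have hcast : (d : ℝ) ≤ (e z : ℝ) + 1 + (T : ℝ) := by exact_mod_cast hbound z hz
      linarith
    calc ∑ z ∈ (hlf x).toFinset, (3 + (d:ℝ) - (e z : ℝ)) / 4
        ≤ ∑ _z ∈ (hlf x).toFinset, (4 + (T:ℝ)) / 4 := Finset.sum_le_sum hle
      _ = (d : ℝ) * ((4 + (T:ℝ)) / 4) := by
          rw [Finset.sum_const, nsmul_eq_mul]
      _ = (2 + (T:ℝ)/2) * ((d:ℝ)/2) := by ring
  have hdposR : (0:ℝ) < (d:ℝ)/2 := by positivity
  calc gam2 G f x ≤ (2 + (T:ℝ)/2) * ((d:ℝ)/2) := hsum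
    _ < K * ((d:ℝ)/2) := mul_lt_mul_of_pos_right hK hdposR
    _ = K * gam G f f x := by rw [hgamx]
end
end

section
/- Let H_n be the n-dimensional hypercube graph (vertex set {0,1}^n, with two vertices adjacent iff their Hamming distance is 1), for n ≥ 1. Then Ric(H_n) = 2: for every f:{0,1}^n→ℝ and every vertex x, Γ₂(f)(x) ≥ 2·Γ(f)(x), and 2 is the largest constant with this property. -/
noncomputable section
open Matrix

/-- The `n`-dimensional hypercube: vertices `{0,1}ⁿ`, adjacent iff Hamming distance 1. -/
def cubeGraph (n : ℕ) : SimpleGraph (Fin n → Bool) where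
  Adj x y := (Finset.univ.filter fun i => x i ≠ y i).card = 1
  symm := by
    constructor
    intro x y h
    have : (Finset.univ.filter fun i => y i ≠ x i) = (Finset.univ.filter fun i => x i ≠ y i) := by
      apply Finset.filter_congr
      intro i _
      exact ⟨Ne.symm, Ne.symm⟩
    rw [this]
    exact h
  loopless := by constructor; intro x h; simp at h

/-!
On a graph whose neighbours of `x` are `σ i x` for commuting moves `σ i`, expanding `Γ₂` and
symmetrizing in the pair of directions gives
`Γ₂(f)(x) = ¼ Σᵢ Σⱼ (f(σⱼσᵢx) - f(σᵢx) - f(σⱼx) + f(x))²`.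
When the moves are involutions, the diagonal terms `i = j` alone sum to `2 Γ(f)(x)`, so
`Γ₂ ≥ 2 Γ`. A function depending on a single coordinate makes every off-diagonal term vanish,
so equality holds for it, and `2` cannot be improved.
-/

open Finset Function

lemma sum_sum_eq_half_sum_sum_add_swap {ι : Type*} [Fintype ι] (L : ι → ι → ℝ) :
    ∑ i, ∑ j, L i j = (1/2) * ∑ i, ∑ j, (L i j + L j i) := by
  simp only [sum_add_distrib]
  rw [sum_comm (f := fun i j => L j i)]
  ring

section CommutingInvolutions

variable {V ι : Type*} {σ : ι → V → V}

variable (σ) in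
def secondDiff (f : V → ℝ) (x : V) (i j : ι) : ℝ :=
  f (σ j (σ i x)) - f (σ i x) - f (σ j x) + f x

lemma secondDiff_eq_zero_of_invariant (hcomm : ∀ i j x, σ i (σ j x) = σ j (σ i x))
    {f : V → ℝ} {k : ι} (hf : ∀ j ≠ k, ∀ y, f (σ j y) = f y) (x : V) {i j : ι} (hij : i ≠ j) :
    secondDiff σ f x i j = 0 := by
  by_cases hj : j = k
  · have hi : i ≠ k := hj ▸ hij
    simp only [secondDiff, ← hcomm i j, hf i hi]
    ring
  · simp only [secondDiff, hf j hj]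
    ring

variable [Fintype ι] {G : SimpleGraph V}

lemma lap_eq_sum (hnbr : ∀ x, G.neighborSet x = Set.range (σ · x))
    (hinj : ∀ x, Injective (σ · x)) (f : V → ℝ) (x : V) :
    lap G f x = ∑ i, (f (σ i x) - f x) := by
  change ∑ᶠ y ∈ G.neighborSet x, _ = _
  rw [hnbr, finsum_mem_range (hinj x), finsum_eq_sum_of_fintype]

lemma gam_eq_sum (hnbr : ∀ x, G.neighborSet x = Set.range (σ · x))
    (hinj : ∀ x, Injective (σ · x)) (f g : V → ℝ) (x : V) :
    gam G f g x = (1/2) * ∑ i, (f x - f (σ i x)) * (g x - g (σ i x)) := by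
  change (1/2) * ∑ᶠ y ∈ G.neighborSet x, _ = _
  rw [hnbr, finsum_mem_range (hinj x), finsum_eq_sum_of_fintype]

lemma gam_pos_of_ne (hnbr : ∀ x, G.neighborSet x = Set.range (σ · x))
    (hinj : ∀ x, Injective (σ · x)) {f : V → ℝ} {x : V} {i : ι} (h : f x ≠ f (σ i x)) :
    0 < gam G f f x := by
  rw [gam_eq_sum hnbr hinj]
  have hi : 0 < (f x - f (σ i x)) * (f x - f (σ i x)) := mul_self_pos.mpr (sub_ne_zero.mpr h)
  have := single_le_sum (f := fun i => (f x - f (σ i x)) * (f x - f (σ i x)))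
    (fun j _ => mul_self_nonneg _) (mem_univ i)
  linarith

theorem gam2_eq_sum_secondDiff_sq (hnbr : ∀ x, G.neighborSet x = Set.range (σ · x))
    (hinj : ∀ x, Injective (σ · x)) (hcomm : ∀ i j x, σ i (σ j x) = σ j (σ i x))
    (f : V → ℝ) (x : V) :
    gam2 G f x = (1/4) * ∑ i, ∑ j, secondDiff σ f x i j ^ 2 := by
  simp only [gam2, lap_eq_sum hnbr hinj, gam_eq_sum hnbr hinj, mul_sum, ← sum_sub_distrib]
  -- after symmetrizing in `i, j`, commutativity turns each pair of summands into a square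
  conv_lhs => rw [sum_sum_eq_half_sum_sum_add_swap]
  rw [mul_sum]
  refine sum_congr rfl fun i _ => ?_
  rw [mul_sum]
  refine sum_congr rfl fun j _ => ?_
  simp only [secondDiff, hcomm i j]
  ring

lemma two_mul_gam_eq_sum_secondDiff_sq (hnbr : ∀ x, G.neighborSet x = Set.range (σ · x))
    (hinj : ∀ x, Injective (σ · x)) (hinv : ∀ i x, σ i (σ i x) = x) (f : V → ℝ) (x : V) :
    2 * gam G f f x = (1/4) * ∑ i, secondDiff σ f x i i ^ 2 := by
  simp only [gam_eq_sum hnbr hinj, secondDiff, hinv, mul_sum, ← mul_assoc]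
  refine sum_congr rfl fun i _ => ?_
  ring

theorem ricGE_two_of_commuting_involutions (hnbr : ∀ x, G.neighborSet x = Set.range (σ · x))
    (hinj : ∀ x, Injective (σ · x)) (hcomm : ∀ i j x, σ i (σ j x) = σ j (σ i x))
    (hinv : ∀ i x, σ i (σ i x) = x) : RicGE G 2 := by
  intro f x
  rw [two_mul_gam_eq_sum_secondDiff_sq hnbr hinj hinv, gam2_eq_sum_secondDiff_sq hnbr hinj hcomm]
  gcongr with i
  exact single_le_sum (f := fun j => secondDiff σ f x i j ^ 2) (fun j _ => sq_nonneg _) (mem_univ i)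

theorem gam2_eq_two_mul_gam_of_invariant (hnbr : ∀ x, G.neighborSet x = Set.range (σ · x))
    (hinj : ∀ x, Injective (σ · x)) (hcomm : ∀ i j x, σ i (σ j x) = σ j (σ i x))
    (hinv : ∀ i x, σ i (σ i x) = x) {f : V → ℝ} {k : ι} (hf : ∀ j ≠ k, ∀ y, f (σ j y) = f y)
    (x : V) : gam2 G f x = 2 * gam G f f x := by
  rw [two_mul_gam_eq_sum_secondDiff_sq hnbr hinj hinv, gam2_eq_sum_secondDiff_sq hnbr hinj hcomm]
  congr 1
  refine sum_congr rfl fun i _ => ?_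
  rw [sum_eq_single i fun j _ hji => by
    rw [secondDiff_eq_zero_of_invariant hcomm hf x (Ne.symm hji), zero_pow two_ne_zero]]
  simp

end CommutingInvolutions

def flipCoord {n : ℕ} (i : Fin n) (x : Fin n → Bool) : Fin n → Bool :=
  update x i (!x i)

lemma flipCoord_of_ne {n : ℕ} {i j : Fin n} (h : j ≠ i) (x : Fin n → Bool) :
    flipCoord i x j = x j :=
  update_of_ne h _ x

lemma flipCoord_flipCoord {n : ℕ} (i : Fin n) (x : Fin n → Bool) :
    flipCoord i (flipCoord i x) = x := by
  simp [flipCoord]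

lemma flipCoord_comm {n : ℕ} (i j : Fin n) (x : Fin n → Bool) :
    flipCoord i (flipCoord j x) = flipCoord j (flipCoord i x) := by
  rcases eq_or_ne i j with rfl | hij
  · rfl
  · simp only [flipCoord, update_of_ne hij, update_of_ne hij.symm]
    exact update_comm hij.symm _ _ x

lemma flipCoord_injective {n : ℕ} (x : Fin n → Bool) : Injective (flipCoord · x) := by
  intro i j h
  by_contra hij
  have := congrFun h i
  simp [flipCoord, hij] at this

lemma cubeGraph_neighborSet (n : ℕ) (x : Fin n → Bool) :
    (cubeGraph n).neighborSet x = Set.range (flipCoord · x) := by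
  ext y
  simp only [SimpleGraph.mem_neighborSet, cubeGraph, Set.mem_range]
  rw [card_eq_one]
  constructor
  · rintro ⟨k, hk⟩
    have hdiff : ∀ j, x j ≠ y j ↔ j = k := by simpa [Finset.ext_iff] using hk
    refine ⟨k, funext fun j => ?_⟩
    rcases eq_or_ne j k with rfl | hj
    · simpa [flipCoord] using (Bool.eq_not.mpr ((hdiff j).mpr rfl).symm).symm
    · simpa [flipCoord_of_ne hj] using (hdiff j).not.mpr hj
  · rintro ⟨k, rfl⟩
    refine ⟨k, Finset.ext fun j => ?_⟩
    rw [Finset.mem_filter, Finset.mem_singleton]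
    rcases eq_or_ne j k with rfl | hj <;> simp [flipCoord, *]

/-- `Ric(Hₙ) = 2` for `n ≥ 1`. -/
theorem ric_hypercube (n : ℕ) (hn : 1 ≤ n) :
    RicGE (cubeGraph n) 2 ∧ ∀ K : ℝ, RicGE (cubeGraph n) K → K ≤ 2 := by
  have hnbr := cubeGraph_neighborSet n
  refine ⟨ricGE_two_of_commuting_involutions hnbr flipCoord_injective flipCoord_comm
    flipCoord_flipCoord, fun K hK => ?_⟩
  let k : Fin n := ⟨0, hn⟩
  let f : (Fin n → Bool) → ℝ := fun v => if v k then 1 else 0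
  have hf : ∀ j ≠ k, ∀ y, f (flipCoord j y) = f y := fun j hj y => by
    simp only [f, flipCoord_of_ne hj.symm]
  let x : Fin n → Bool := fun _ => false
  have hgam : 0 < gam (cubeGraph n) f f x :=
    gam_pos_of_ne hnbr flipCoord_injective (i := k) (by simp [f, x, flipCoord])
  have hK' := hK f x
  rw [gam2_eq_two_mul_gam_of_invariant hnbr flipCoord_injective flipCoord_comm
    flipCoord_flipCoord hf x] at hK'
  exact le_of_mul_le_mul_right hK' hgam
end
end

section
/- Let K_n be the complete graph on n ≥ 2 vertices. Then Ric(K_n) = 1 + n/2: for every f:V→ℝ and every vertex x, Γ₂(f)(x) ≥ (1 + n/2)·Γ(f)(x), and 1 + n/2 is the largest constant with this property. -/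
noncomputable section
open Matrix

namespace RicCompleteAux

variable {n : ℕ}

lemma top_finsum (x : Fin n) (h : Fin n → ℝ) :
    ∑ᶠ y ∈ {y | (⊤ : SimpleGraph (Fin n)).Adj x y}, h y = ∑ y ∈ ({x}ᶜ : Finset (Fin n)), h y := by
  have hs : {y | (⊤ : SimpleGraph (Fin n)).Adj x y}
      = ((({x}ᶜ : Finset (Fin n)) : Finset (Fin n)) : Set (Fin n)) := by
    ext y
    simp [ne_comm]
  rw [hs, finsum_mem_coe_finset]

lemma lap_top (g : Fin n → ℝ) (x : Fin n) :
    lap (⊤ : SimpleGraph (Fin n)) g x = ∑ y ∈ ({x}ᶜ : Finset (Fin n)), (g y - g x) := by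
  rw [lap, top_finsum]

lemma gam_top (f g : Fin n → ℝ) (x : Fin n) :
    gam (⊤ : SimpleGraph (Fin n)) f g x
      = (1/2) * ∑ y ∈ ({x}ᶜ : Finset (Fin n)), (f x - f y) * (g x - g y) := by
  rw [gam, top_finsum]

lemma card_compl_singleton (x : Fin n) :
    ((({x}ᶜ : Finset (Fin n)).card : ℝ)) = (n : ℝ) - 1 := by
  have hx : (0:ℕ) < n := x.pos
  rw [Finset.card_compl, Finset.card_singleton, Fintype.card_fin, Nat.cast_sub hx, Nat.cast_one]

lemma lap_top_eq (f : Fin n → ℝ) (x : Fin n) :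
    lap (⊤ : SimpleGraph (Fin n)) f x = (∑ y, f y) - (n : ℝ) * f x := by
  rw [lap_top, Finset.sum_sub_distrib, Finset.sum_const, nsmul_eq_mul, card_compl_singleton]
  have h1 : ∑ y ∈ ({x}ᶜ : Finset (Fin n)), f y + ∑ y ∈ ({x} : Finset (Fin n)), f y = ∑ y, f y :=
    Finset.sum_compl_add_sum _ _
  rw [Finset.sum_singleton] at h1
  linarith

lemma gam_lap (f : Fin n → ℝ) (x : Fin n) :
    gam (⊤ : SimpleGraph (Fin n)) f (lap (⊤ : SimpleGraph (Fin n)) f) x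
      = -(n : ℝ) * gam (⊤ : SimpleGraph (Fin n)) f f x := by
  rw [gam_top, gam_top]
  have key : ∀ y ∈ ({x}ᶜ : Finset (Fin n)),
      (f x - f y) * (lap (⊤ : SimpleGraph (Fin n)) f x - lap (⊤ : SimpleGraph (Fin n)) f y)
        = (-(n:ℝ)) * ((f x - f y) * (f x - f y)) := by
    intro y _
    rw [lap_top_eq, lap_top_eq]
    ring
  rw [Finset.sum_congr rfl key, ← Finset.mul_sum]
  ring

lemma sum_gam_top (f : Fin n → ℝ) (x : Fin n) :
    ∑ y ∈ ({x}ᶜ : Finset (Fin n)), gam (⊤ : SimpleGraph (Fin n)) f f y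
      = gam (⊤ : SimpleGraph (Fin n)) f f x
        + (1/2) * ∑ y ∈ ({x}ᶜ : Finset (Fin n)),
            ∑ z ∈ (({y}ᶜ : Finset (Fin n)).erase x), (f y - f z) * (f y - f z) := by
  have key : ∀ y ∈ ({x}ᶜ : Finset (Fin n)),
      gam (⊤ : SimpleGraph (Fin n)) f f y
        = (1/2) * ((f x - f y) * (f x - f y))
          + (1/2) * ∑ z ∈ (({y}ᶜ : Finset (Fin n)).erase x), (f y - f z) * (f y - f z) := by
    intro y hy
    have hyx : y ≠ x := by simpa using hy
    have hxy : x ∈ ({y}ᶜ : Finset (Fin n)) := by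
      simp [Ne.symm hyx]
    rw [gam_top, ← Finset.add_sum_erase _ _ hxy]
    ring
  rw [Finset.sum_congr rfl key, Finset.sum_add_distrib, ← Finset.mul_sum, ← Finset.mul_sum,
    gam_top]

lemma gam2_top (f : Fin n → ℝ) (x : Fin n) :
    gam2 (⊤ : SimpleGraph (Fin n)) f x
      = (1 + (n : ℝ) / 2) * gam (⊤ : SimpleGraph (Fin n)) f f x
        + (1/4) * ∑ y ∈ ({x}ᶜ : Finset (Fin n)),
            ∑ z ∈ (({y}ᶜ : Finset (Fin n)).erase x), (f y - f z) * (f y - f z) := by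
  rw [gam2, gam_lap, lap_top, Finset.sum_sub_distrib, sum_gam_top, Finset.sum_const,
    nsmul_eq_mul, card_compl_singleton]
  ring

end RicCompleteAux

open RicCompleteAux in
/-- for the complete graph `Kₙ` (`n ≥ 2`), `Ric(Kₙ) = 1 + n/2`. -/
theorem ric_complete (n : ℕ) (hn : 2 ≤ n) :
    RicGE (⊤ : SimpleGraph (Fin n)) (1 + (n : ℝ) / 2) ∧
      ∀ K : ℝ, RicGE (⊤ : SimpleGraph (Fin n)) K → K ≤ 1 + (n : ℝ) / 2 := by
  constructor
  · intro f x
    rw [gam2_top f x]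
    have hD : (0:ℝ) ≤ ∑ y ∈ ({x}ᶜ : Finset (Fin n)),
        ∑ z ∈ (({y}ᶜ : Finset (Fin n)).erase x), (f y - f z) * (f y - f z) :=
      Finset.sum_nonneg fun y _ => Finset.sum_nonneg fun z _ => mul_self_nonneg _
    linarith
  · intro K hK
    have hx0 : (0:ℕ) < n := by omega
    set x : Fin n := ⟨0, hx0⟩ with hxdef
    set f : Fin n → ℝ := fun y => if y = x then 1 else 0 with hf
    have hg : gam (⊤ : SimpleGraph (Fin n)) f f x = ((n : ℝ) - 1) / 2 := by
      rw [gam_top]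
      have key : ∀ y ∈ ({x}ᶜ : Finset (Fin n)), (f x - f y) * (f x - f y) = 1 := by
        intro y hy
        have hyx : y ≠ x := by simpa using hy
        simp [hf, hyx]
      rw [Finset.sum_congr rfl key, Finset.sum_const, nsmul_eq_mul, card_compl_singleton,
        mul_one]
      ring
    have hD : (∑ y ∈ ({x}ᶜ : Finset (Fin n)),
        ∑ z ∈ (({y}ᶜ : Finset (Fin n)).erase x), (f y - f z) * (f y - f z)) = 0 := by
      apply Finset.sum_eq_zero
      intro y hy
      apply Finset.sum_eq_zero
      intro z hz
      have hyx : y ≠ x := by simpa using hy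
      have hzx : z ≠ x := (Finset.mem_erase.mp hz).1
      simp [hf, hyx, hzx]
    have h := hK f x
    rw [gam2_top f x, hD, hg] at h
    have hpos : (0:ℝ) < ((n : ℝ) - 1) / 2 := by
      have h2 : (2:ℝ) ≤ (n:ℝ) := by exact_mod_cast hn
      linarith
    have h' : K * (((n:ℝ) - 1) / 2) ≤ (1 + (n:ℝ)/2) * (((n:ℝ) - 1) / 2) := by linarith
    exact le_of_mul_le_mul_right (by linarith [h']) hpos
end
end

section
/- Let X be a finitely generated abelian group and S a finite symmetric generating set of X (s∈S implies s⁻¹∈S, and the identity is not in S). Let G be the Cayley graph of X with respect to S. Then Ric(G) ≥ 0: for every f:X→ℝ and every x∈X, Γ₂(f)(x) ≥ 0. -/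
/-!
On a Cayley graph, `Γ₂(f)(x)` expands into a double sum over pairs of generators `(a, b)`.
When the group is abelian, `x a b = x b a`, and symmetrizing the summand in `(a, b)` turns it
into a quarter of the squared second difference `f(xab) - f(xa) - f(xb) + f(x)`, so `Γ₂ ≥ 0`.
-/

noncomputable section
open Matrix

/-- The Cayley graph of a group `X` with respect to a symmetric set `S` not containing `1`:
`x ~ y` iff `x⁻¹ * y ∈ S`. -/
def cayleyGraph (X : Type*) [Group X] (S : Set X) (hsym : ∀ s ∈ S, s⁻¹ ∈ S)
    (h1 : (1 : X) ∉ S) : SimpleGraph X where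
  Adj x y := x⁻¹ * y ∈ S
  symm := by
    constructor
    intro x y h
    simpa [_root_.mul_inv_rev] using hsym _ h
  loopless := by
    constructor
    intro x h
    rw [inv_mul_cancel] at h
    exact h1 h

section CayleyGraph

variable {X : Type*} {S : Set X}

theorem cayleyGraph_neighbors_eq_image [Group X] (hsym : ∀ s ∈ S, s⁻¹ ∈ S) (h1 : (1 : X) ∉ S)
    (x : X) : {y | (cayleyGraph X S hsym h1).Adj x y} = (x * ·) '' S := by
  ext y
  constructor
  · intro hy
    exact ⟨x⁻¹ * y, hy, mul_inv_cancel_left x y⟩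
  · rintro ⟨s, hs, rfl⟩
    simpa [cayleyGraph] using hs

theorem finsum_cayleyGraph_adj [Group X] (hfin : S.Finite) (hsym : ∀ s ∈ S, s⁻¹ ∈ S)
    (h1 : (1 : X) ∉ S) (g : X → ℝ) (x : X) :
    ∑ᶠ y ∈ {y | (cayleyGraph X S hsym h1).Adj x y}, g y = ∑ s ∈ hfin.toFinset, g (x * s) := by
  rw [cayleyGraph_neighbors_eq_image, finsum_mem_image (mul_right_injective x).injOn,
    ← finsum_mem_coe_finset, hfin.coe_toFinset]

theorem lap_cayleyGraph [Group X] (hfin : S.Finite) (hsym : ∀ s ∈ S, s⁻¹ ∈ S)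
    (h1 : (1 : X) ∉ S) (g : X → ℝ) (x : X) :
    lap (cayleyGraph X S hsym h1) g x = ∑ s ∈ hfin.toFinset, (g (x * s) - g x) :=
  finsum_cayleyGraph_adj hfin hsym h1 _ x

theorem gam_cayleyGraph [Group X] (hfin : S.Finite) (hsym : ∀ s ∈ S, s⁻¹ ∈ S)
    (h1 : (1 : X) ∉ S) (g h : X → ℝ) (x : X) :
    gam (cayleyGraph X S hsym h1) g h x =
      1 / 2 * ∑ s ∈ hfin.toFinset, (g x - g (x * s)) * (h x - h (x * s)) := by
  rw [gam, finsum_cayleyGraph_adj hfin]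

theorem gam2_cayleyGraph_eq_sum [Group X] (hfin : S.Finite) (hsym : ∀ s ∈ S, s⁻¹ ∈ S)
    (h1 : (1 : X) ∉ S) (f : X → ℝ) (x : X) :
    gam2 (cayleyGraph X S hsym h1) f x =
      ∑ a ∈ hfin.toFinset, ∑ b ∈ hfin.toFinset,
        (((f (x * a) - f (x * a * b)) ^ 2 - (f x - f (x * b)) ^ 2) / 4
          + (f x - f (x * a)) * (f (x * a * b) - f (x * a) - f (x * b) + f x) / 2) := by
  simp only [gam2, lap_cayleyGraph hfin, gam_cayleyGraph hfin, Finset.mul_sum,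
    ← Finset.sum_sub_distrib]
  refine Finset.sum_congr rfl fun a _ ↦ Finset.sum_congr rfl fun b _ ↦ ?_
  ring

theorem gam2_cayleyGraph_eq_sum_sq [CommGroup X] (hfin : S.Finite) (hsym : ∀ s ∈ S, s⁻¹ ∈ S)
    (h1 : (1 : X) ∉ S) (f : X → ℝ) (x : X) :
    gam2 (cayleyGraph X S hsym h1) f x =
      ∑ a ∈ hfin.toFinset, ∑ b ∈ hfin.toFinset,
        (f (x * a * b) - f (x * a) - f (x * b) + f x) ^ 2 / 4 := by
  set F := hfin.toFinset
  set L : X → X → ℝ := fun a b ↦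
    ((f (x * a) - f (x * a * b)) ^ 2 - (f x - f (x * b)) ^ 2) / 4
      + (f x - f (x * a)) * (f (x * a * b) - f (x * a) - f (x * b) + f x) / 2 with hL
  have h_pair (a b : X) :
      L a b + L b a = 2 * ((f (x * a * b) - f (x * a) - f (x * b) + f x) ^ 2 / 4) := by
    simp only [hL, mul_right_comm x b a]
    ring
  have h_swap : ∑ a ∈ F, ∑ b ∈ F, L a b = ∑ a ∈ F, ∑ b ∈ F, L b a := Finset.sum_comm
  calc gam2 (cayleyGraph X S hsym h1) f x
      = ∑ a ∈ F, ∑ b ∈ F, L a b := gam2_cayleyGraph_eq_sum hfin hsym h1 f x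
    _ = (∑ a ∈ F, ∑ b ∈ F, (L a b + L b a)) / 2 := by
        simp only [Finset.sum_add_distrib, ← h_swap]
        ring
    _ = _ := by simp only [h_pair, ← Finset.mul_sum]; ring

end CayleyGraph

theorem cayley_abelian_ric_nonneg_general (X : Type*) [CommGroup X] (S : Set X)
    (hfin : S.Finite) (hsym : ∀ s ∈ S, s⁻¹ ∈ S) (h1 : (1 : X) ∉ S) :
    ∀ (f : X → ℝ) (x : X), 0 ≤ gam2 (cayleyGraph X S hsym h1) f x := by
  intro f x
  rw [gam2_cayleyGraph_eq_sum_sq hfin]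
  positivity

/-- the Cayley graph of a finitely generated abelian group with respect to
any finite symmetric generating set has `Ric ≥ 0`: `Γ₂(f)(x) ≥ 0` for all `f, x`. -/
theorem cayley_abelian_ric_nonneg (X : Type*) [CommGroup X] (S : Set X)
    (hfin : S.Finite) (hsym : ∀ s ∈ S, s⁻¹ ∈ S) (h1 : (1 : X) ∉ S)
    (hgen : Subgroup.closure S = ⊤) :
    ∀ (f : X → ℝ) (x : X), 0 ≤ gam2 (cayleyGraph X S hsym h1) f x :=
  cayley_abelian_ric_nonneg_general X S hfin hsym h1
end
end

section
/- There is a constant c₁ > 0 (independent of n) such that for all sufficiently large n, the Cayley graph of the symmetric group S_n with generating set {(12), (12…n), (12…n)⁻¹} has Cheeger constant h ≤ c₁·n⁻². (A witnessing set is A = {φ ∈ S_n : dist(φ(1),φ(2)) ≤ n/4}, where dist is the cyclic distance on {1,…,n}.) -/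
noncomputable section
open Matrix

open Classical in
/-- Degree of a vertex. -/
def degC {V : Type*} [Fintype V] (G : SimpleGraph V) (x : V) : ℕ :=
  (Finset.univ.filter fun y => G.Adj x y).card

open Classical in
/-- The Laplacian matrix `Δ = A - D` (negative semidefinite). -/
def lapMat {V : Type*} [Fintype V] (G : SimpleGraph V) : Matrix V V ℝ :=
  Matrix.of fun x y => (if G.Adj x y then (1:ℝ) else 0) - (if x = y then (degC G x : ℝ) else 0)

/-- The spectral gap: least nonzero eigenvalue of `-Δ`. -/
def spectralGap {V : Type*} [Fintype V] (G : SimpleGraph V) : ℝ :=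
  sInf {μ : ℝ | μ ≠ 0 ∧ ∃ f : V → ℝ, f ≠ 0 ∧ (-(lapMat G)) *ᵥ f = μ • f}

open Classical in
/-- Number of edges from `A` to its complement. -/
def boundary {V : Type*} [Fintype V] (G : SimpleGraph V) (A : Finset V) : ℕ :=
  ∑ x ∈ A, (Finset.univ.filter fun y => G.Adj x y ∧ y ∉ A).card

/-- The Cheeger (edge-isoperimetric) constant. -/
def cheeger {V : Type*} [Fintype V] (G : SimpleGraph V) : ℝ :=
  sInf {r : ℝ | ∃ A : Finset V, 0 < A.card ∧ 2 * A.card ≤ Fintype.card V ∧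
    r = (boundary G A : ℝ) / (A.card : ℝ)}

/-- The heat semigroup `P_t f = exp(tΔ) f`. -/
def heat {V : Type*} [Fintype V] [DecidableEq V] (G : SimpleGraph V) (t : ℝ) (f : V → ℝ) :
    V → ℝ :=
  (NormedSpace.exp (t • lapMat G)) *ᵥ f

/-- The generating set `{(1 2), (1 2 ⋯ n), (1 2 ⋯ n)⁻¹}` in the symmetric group `S_{n+2}`,
realized as permutations of `Fin (n+2)`; `finRotate` is the long cycle. -/
def snGen (n : ℕ) : Set (Equiv.Perm (Fin (n + 2))) :=
  {Equiv.swap 0 1, finRotate (n + 2), (finRotate (n + 2))⁻¹}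

/-- The Cayley graph of `S_{n+2}` with generating set `snGen n`. -/
def snGraph (n : ℕ) : SimpleGraph (Equiv.Perm (Fin (n + 2))) where
  Adj x y := x ≠ y ∧ x⁻¹ * y ∈ snGen n
  symm := ⟨by
    rintro x y ⟨hne, hs⟩
    refine ⟨hne.symm, ?_⟩
    have h : (x⁻¹ * y)⁻¹ ∈ snGen n := by
      rcases hs with h | h | h <;> rw [h] <;> simp [snGen, Equiv.swap_inv]
    simpa [_root_.mul_inv_rev] using h⟩
  loopless := ⟨by rintro x ⟨hne, -⟩; exact hne rfl⟩

/-!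
Take for `A` the permutations `x` for which the position `x⁻¹ 1` lies between `1` and
`T ≈ n / 2` steps forward from `x⁻¹ 0` on the cycle `Fin n`. Multiplying on the right by the
long cycle shifts both positions together, so the only edges leaving `A` are swap edges, and a
swap edge can leave `A` only when the pair of positions is one of three boundary pairs. Each
pair of distinct positions is realized by the same number `s` of permutations, so
`|∂A| ≤ 3 s` while `|A| = n T s`, giving `|∂A| / |A| ≤ 3 / (n T) ≤ 12 / n²`; left
multiplication by the swap maps `A` into its complement, so `|A| ≤ n! / 2`.
-/

open Finset Equiv

lemma cheeger_le_of_card {V : Type*} [Fintype V] (G : SimpleGraph V) (A : Finset V)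
    (hA : 0 < #A) (hA' : 2 * #A ≤ Fintype.card V) :
    cheeger G ≤ boundary G A / #A :=
  csInf_le ⟨0, by rintro r ⟨B, -, -, rfl⟩; positivity⟩ ⟨A, hA, hA', rfl⟩

lemma boundary_le_card_filter {V : Type*} [Fintype V] [DecidableEq V] (G : SimpleGraph V)
    (A : Finset V) (f : V → V) (hf : ∀ x ∈ A, ∀ y, G.Adj x y → y ∉ A → y = f x) :
    boundary G A ≤ #{x ∈ A | f x ∉ A} := by
  rw [boundary, card_filter]
  refine sum_le_sum fun x hx => ?_
  split_ifs with hfx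
  · simp only [nonpos_iff_eq_zero, card_eq_zero, filter_eq_empty_iff, mem_univ, true_imp_iff]
    exact fun y hy => hy.2 (hf x hx y hy.1 hy.2 ▸ hfx)
  · exact card_le_one.mpr fun y hy z hz => by
      simp only [mem_filter, mem_univ, true_and] at hy hz
      rw [hf x hx y hy.1 hy.2, hf x hx z hz.1 hz.2]

lemma two_mul_card_le_of_mul_notMem {G : Type*} [Group G] [Fintype G] [DecidableEq G]
    (A : Finset G) (g : G) (h : ∀ x ∈ A, g * x ∉ A) : 2 * #A ≤ Fintype.card G := by
  have hdisj : Disjoint A (A.image (g * ·)) := by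
    rw [disjoint_left]
    intro x hx hx'
    obtain ⟨y, hy, rfl⟩ := mem_image.mp hx'
    exact h y hy hx
  calc 2 * #A = #A + #(A.image (g * ·)) := by
        rw [card_image_of_injective _ (mul_right_injective g)]; ring
    _ = #(A ∪ A.image (g * ·)) := (card_union_of_disjoint hdisj).symm
    _ ≤ Fintype.card G := card_le_univ _

section posPair
variable {α : Type*}

def posPair (a b : α) (x : Perm α) : α × α := (x⁻¹ a, x⁻¹ b)

lemma posPair_mul (a b : α) (x s : Perm α) :
    posPair a b (x * s) = (s⁻¹ (x⁻¹ a), s⁻¹ (x⁻¹ b)) := by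
  simp only [posPair, _root_.mul_inv_rev, Perm.mul_apply]

variable [DecidableEq α]

lemma Equiv.Perm.exists_apply_eq_apply_eq {p q a b : α} (hpq : p ≠ q) (hab : a ≠ b) :
    ∃ σ : Perm α, σ p = a ∧ σ q = b := by
  have hq : swap a p q ≠ a := by rwa [Ne, swap_apply_eq_iff, swap_apply_left, eq_comm]
  refine ⟨swap (swap a p q) b * swap a p, ?_, by simp⟩
  rw [Perm.mul_apply, swap_apply_right, swap_apply_of_ne_of_ne hq.symm hab]

lemma posPair_swap_mul (a b : α) (x : Perm α) :
    posPair a b (swap a b * x) = (posPair a b x).swap := by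
  simp [posPair, _root_.mul_inv_rev, swap_inv]

variable [Fintype α]

lemma card_fiber_posPair {a b : α} (hab : a ≠ b) (pq : α × α) :
    #{x | posPair a b x = pq} = if pq.1 = pq.2 then 0 else #{x | posPair a b x = (a, b)} := by
  split_ifs with h
  · refine card_eq_zero.mpr (filter_eq_empty_iff.mpr fun x _ hx => hab ?_)
    simp only [posPair, Prod.ext_iff] at hx
    exact x⁻¹.injective (hx.1.trans (h.trans hx.2.symm))
  · obtain ⟨σ, hσa, hσb⟩ := Perm.exists_apply_eq_apply_eq h hab
    refine card_nbij' (· * σ⁻¹) (· * σ) ?_ ?_ (fun x _ => by simp) (fun x _ => by simp)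
    · intro x hx
      rw [mem_coe, mem_filter] at hx ⊢
      obtain ⟨-, rfl⟩ := hx
      rw [posPair_mul, inv_inv]
      exact ⟨mem_univ _, Prod.ext hσa hσb⟩
    · intro x hx
      rw [mem_coe, mem_filter, posPair, Prod.mk.injEq] at hx
      rw [mem_coe, mem_filter, posPair_mul, hx.2.1, hx.2.2, Prod.ext_iff, Perm.inv_eq_iff_eq,
        Perm.inv_eq_iff_eq]
      exact ⟨mem_univ _, hσa.symm, hσb.symm⟩

lemma card_filter_posPair_mem {a b : α} (hab : a ≠ b) (P : Finset (α × α)) :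
    #{x | posPair a b x ∈ P} = #{pq ∈ P | pq.1 ≠ pq.2} * #{x | posPair a b x = (a, b)} := by
  rw [card_eq_sum_card_fiberwise (f := posPair a b) (t := P) (fun x hx => by simpa using hx)]
  have hfiber : ∀ pq ∈ P,
      #{x ∈ {x | posPair a b x ∈ P} | posPair a b x = pq} = #{x | posPair a b x = pq} :=
    fun pq hpq => by
      rw [filter_filter]
      exact congrArg card (filter_congr fun x _ => and_iff_right_of_imp fun h => h ▸ hpq)
  rw [sum_congr rfl hfiber, sum_congr rfl fun pq _ => card_fiber_posPair hab pq, sum_ite,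
    sum_const_zero, zero_add, sum_const, smul_eq_mul]

end posPair

section Cyclic
variable {k : ℕ}

def forwardNear (k T : ℕ) : Finset (Fin k × Fin k) :=
  {pq | (pq.2 - pq.1).val ∈ Icc 1 T}

lemma Fin.val_sub_eq_ite (p q : Fin k) :
    (q - p).val = if p.val ≤ q.val then q.val - p.val else k + q.val - p.val := by
  split_ifs with h
  · exact Fin.coe_sub_iff_le.mpr h
  · exact Fin.coe_sub_iff_lt.mpr (not_le.mp h)

lemma Fin.val_swap_zero_one {m : ℕ} (c : Fin (m + 2)) :
    (Equiv.swap 0 1 c).val = if c.val = 0 then 1 else if c.val = 1 then 0 else c.val := by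
  simp only [Equiv.swap_apply_def, Fin.ext_iff, Fin.val_zero, Fin.val_one]
  split_ifs <;> rfl

lemma card_filter_val_mem_Icc {T : ℕ} (hT : T < k) :
    #{d : Fin k | d.val ∈ Icc 1 T} = T := by
  calc #{d : Fin k | d.val ∈ Icc 1 T} = #(Icc 1 T) := by
        refine card_nbij (·.val) (fun d hd => by simpa using hd) (fun a _ b _ h => Fin.ext h) ?_
        intro a ha
        simp only [coe_Icc, Set.mem_Icc] at ha
        exact ⟨⟨a, by omega⟩, by simpa using ha, rfl⟩
    _ = T := by simp

lemma card_forwardNear [NeZero k] {T : ℕ} (hT : T < k) : #(forwardNear k T) = k * T := by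
  have : forwardNear k T = Finset.image (fun pd : Fin k × Fin k => (pd.1, pd.1 + pd.2))
      (univ ×ˢ ({d | d.val ∈ Icc 1 T} : Finset (Fin k))) := by
    ext ⟨p, q⟩
    simp only [forwardNear, mem_filter, mem_univ, true_and, mem_image, mem_product, Prod.mk.injEq]
    constructor
    · intro h; exact ⟨(p, q - p), h, rfl, add_sub_cancel p q⟩
    · rintro ⟨⟨p', d⟩, hd, rfl, rfl⟩; simpa using hd
  rw [this, card_image_of_injective _ (fun a b h => by
      simp only [Prod.mk.injEq] at h; exact Prod.ext h.1 (add_left_cancel (h.1 ▸ h.2))),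
    card_product, card_univ, Fintype.card_fin, card_filter_val_mem_Icc hT]

lemma fst_ne_snd_of_mem_forwardNear [NeZero k] {T : ℕ} {pq : Fin k × Fin k}
    (h : pq ∈ forwardNear k T) : pq.1 ≠ pq.2 := by
  intro he
  simp [forwardNear, he] at h

lemma add_mem_forwardNear_iff [NeZero k] {T : ℕ} (p q c : Fin k) :
    (p + c, q + c) ∈ forwardNear k T ↔ (p, q) ∈ forwardNear k T := by
  simp only [forwardNear, mem_filter, mem_univ, true_and, add_sub_add_right_eq_sub]

lemma swap_notMem_forwardNear {T : ℕ} (hT : 2 * T < k) {pq : Fin k × Fin k}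
    (h : pq ∈ forwardNear k T) : pq.swap ∉ forwardNear k T := by
  simp only [forwardNear, mem_filter, mem_univ, true_and, mem_Icc, Prod.fst_swap,
    Prod.snd_swap, Fin.val_sub_eq_ite] at h ⊢
  have := pq.1.isLt; have := pq.2.isLt
  split_ifs at h ⊢ <;> omega

lemma card_forwardNear_exit_le_three {m T : ℕ} (hT : T + 1 < m + 2) :
    #{pq ∈ forwardNear (m + 2) T |
      (Equiv.swap 0 1 pq.1, Equiv.swap 0 1 pq.2) ∉ forwardNear (m + 2) T} ≤ 3 := by
  refine (card_le_card_of_injOn (fun pq => (pq.1.val, pq.2.val))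
    (t := {(0, 1), (1, T + 1), (m + 2 - T, 0)}) ?_ ?_).trans card_le_three
  · rintro ⟨p, q⟩ hpq
    simp only [mem_coe, forwardNear, mem_filter, mem_univ, true_and, mem_Icc,
      Fin.val_sub_eq_ite, Fin.val_swap_zero_one, coe_insert, coe_singleton, Set.mem_insert_iff,
      Set.mem_singleton_iff, Prod.mk.injEq] at hpq ⊢
    have := p.isLt; have := q.isLt
    split_ifs at hpq <;> omega
  · intro a _ b _ h
    simp only [Prod.mk.injEq] at h
    exact Prod.ext (Fin.ext h.1) (Fin.ext h.2)

end Cyclic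

def nearPerms (m T : ℕ) : Finset (Perm (Fin (m + 2))) :=
  {x | posPair 0 1 x ∈ forwardNear (m + 2) T}

section nearPerms
variable {m T : ℕ}

lemma mul_finRotate_mem_nearPerms_iff (x : Perm (Fin (m + 2))) :
    x * finRotate (m + 2) ∈ nearPerms m T ↔ x ∈ nearPerms m T := by
  have h : ∀ c : Fin (m + 2), (finRotate (m + 2))⁻¹ c = c + -1 := fun c => by
    rw [Perm.inv_eq_iff_eq, finRotate_apply, neg_add_cancel_right]
  simp only [nearPerms, mem_filter, mem_univ, true_and, posPair_mul, h,
    add_mem_forwardNear_iff]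
  rfl

lemma mul_finRotate_inv_mem_nearPerms_iff (x : Perm (Fin (m + 2))) :
    x * (finRotate (m + 2))⁻¹ ∈ nearPerms m T ↔ x ∈ nearPerms m T := by
  simp only [nearPerms, mem_filter, mem_univ, true_and, posPair_mul, inv_inv,
    finRotate_apply, add_mem_forwardNear_iff]
  rfl

lemma eq_mul_swap_of_adj_of_mem_nearPerms {x y : Perm (Fin (m + 2))} (hxy : (snGraph m).Adj x y)
    (hx : x ∈ nearPerms m T) (hy : y ∉ nearPerms m T) : y = x * swap 0 1 := by
  obtain ⟨-, hs⟩ := hxy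
  rw [← mul_inv_cancel_left x y] at hy ⊢
  rcases hs with h | h | h <;> rw [h] at hy ⊢
  · exact absurd ((mul_finRotate_mem_nearPerms_iff x).mpr hx) hy
  · exact absurd ((mul_finRotate_inv_mem_nearPerms_iff x).mpr hx) hy

lemma card_nearPerms (hT : T < m + 2) :
    #(nearPerms m T) = (m + 2) * T * #{x : Perm (Fin (m + 2)) | posPair 0 1 x = (0, 1)} := by
  rw [nearPerms, card_filter_posPair_mem zero_ne_one,
    filter_true_of_mem fun _ => fst_ne_snd_of_mem_forwardNear, card_forwardNear hT]

lemma boundary_nearPerms_le (hT : T + 1 < m + 2) :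
    boundary (snGraph m) (nearPerms m T) ≤
      3 * #{x : Perm (Fin (m + 2)) | posPair 0 1 x = (0, 1)} := by
  refine (boundary_le_card_filter _ _ _ fun _ hx _ hxy hy =>
    eq_mul_swap_of_adj_of_mem_nearPerms hxy hx hy).trans ?_
  have : {x ∈ nearPerms m T | x * swap 0 1 ∉ nearPerms m T} = ({x | posPair 0 1 x ∈
      {pq ∈ forwardNear (m + 2) T | (swap 0 1 pq.1, swap 0 1 pq.2) ∉ forwardNear (m + 2) T}} :
        Finset (Perm (Fin (m + 2)))) := by
    ext x
    simp only [nearPerms, mem_filter, mem_univ, true_and, posPair_mul, swap_inv]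
    rfl
  rw [this, card_filter_posPair_mem zero_ne_one]
  exact Nat.mul_le_mul_right _ ((card_filter_le _ _).trans (card_forwardNear_exit_le_three hT))

lemma two_mul_card_nearPerms_le (hT : 2 * T < m + 2) :
    2 * #(nearPerms m T) ≤ Fintype.card (Perm (Fin (m + 2))) := by
  refine two_mul_card_le_of_mul_notMem _ (swap 0 1) fun x hx => ?_
  simp only [nearPerms, mem_filter, mem_univ, true_and, posPair_swap_mul] at hx ⊢
  exact swap_notMem_forwardNear hT hx

end nearPerms

/-- there is `c₁ > 0` such that for all sufficiently large `n`, the Cayley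
graph of `Sₙ` with generators `{(12), (12⋯n)^{±1}}` has Cheeger constant `h ≤ c₁ n⁻²`
(here `n = m + 2`). -/
theorem cheeger_upper_sn :
    ∃ c₁ : ℝ, 0 < c₁ ∧ ∃ N : ℕ, ∀ m : ℕ, N ≤ m →
      cheeger (snGraph m) ≤ c₁ / ((m : ℝ) + 2) ^ 2 := by
  refine ⟨12, by norm_num, 2, fun m hm => ?_⟩
  set T := (m + 1) / 2
  set s := #{x : Perm (Fin (m + 2)) | posPair 0 1 x = (0, 1)}
  have hs : 0 < s := card_pos.mpr ⟨1, mem_filter.mpr ⟨mem_univ _, rfl⟩⟩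
  have hT : 0 < T := by omega
  have hA : 0 < #(nearPerms m T) := by
    rw [card_nearPerms (by omega)]; positivity
  have h4T : (m : ℝ) + 2 ≤ 4 * T := by norm_cast; omega
  calc cheeger (snGraph m) ≤ boundary (snGraph m) (nearPerms m T) / #(nearPerms m T) :=
        cheeger_le_of_card _ _ hA (two_mul_card_nearPerms_le (by omega))
    _ ≤ (3 * s : ℕ) / ((m + 2) * T * s : ℕ) := by
        rw [← card_nearPerms (by omega)]
        gcongr
        exact_mod_cast boundary_nearPerms_le (by omega)
    _ ≤ 12 / ((m : ℝ) + 2) ^ 2 := by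
        rw [div_le_div_iff₀ (by positivity) (by positivity)]
        push_cast
        nlinarith [mul_le_mul_of_nonneg_left h4T (by positivity : (0 : ℝ) ≤ 3 * s * (m + 2))]
end
end

section
/- Let C_n be the cycle graph on n vertices with n ≥ 5 (or the bi-infinite path C_∞). Then Ric(C_n) = 0: Γ₂(f)(x) ≥ 0 for every f and x, and for every K > 0 there exist f and x with Γ₂(f)(x) < K·Γ(f)(x). (Equality is achieved by the function taking values −2,−1,0,1,2 along a path of length 4 centered at x.) -/
noncomputable section
open Matrix

/-- The cycle graph `Cₙ` on `ZMod n`: `x ~ y` iff `x ≠ y` and `x - y = ±1`. -/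
def cycleGraph (n : ℕ) : SimpleGraph (ZMod n) where
  Adj x y := x ≠ y ∧ (x - y = 1 ∨ y - x = 1)
  symm := by constructor; rintro x y ⟨h, h2⟩; exact ⟨h.symm, h2.symm⟩
  loopless := by constructor; rintro x ⟨h, -⟩; exact h rfl

/-- The bi-infinite path `C_∞` on `ℤ`. -/
def pathGraph : SimpleGraph ℤ where
  Adj x y := x = y + 1 ∨ y = x + 1
  symm := by constructor; rintro x y (h | h); exacts [Or.inr h, Or.inl h]
  loopless := by constructor; rintro x (h | h) <;> omega

/-!
On both graphs every vertex `x` has exactly the two neighbours `x - 1` and `x + 1`, so `Γ₂(f)(x)`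
only sees the values of `f` on `x - 2, …, x + 2`, and expanding the definitions gives the
sum of squares of second differences
`4 Γ₂(f)(x) = (D²f(x-1))² + 2 (D²f(x))² + (D²f(x+1))²`, with `D²f(y) = f(y-1) - 2 f(y) + f(y+1)`.
Hence `Γ₂ ≥ 0`, while a function that is linear on `x - 2, …, x + 2` has `Γ₂(f)(x) = 0`
but `Γ(f)(x) > 0`.
-/

section NeighboursSubOneAddOne

variable {R : Type*} [CommRing R] {G : SimpleGraph R}
  (hG : ∀ x, {y | G.Adj x y} = {x - 1, x + 1}) (h2 : (2 : R) ≠ 0)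
include hG h2

theorem finsum_adj_eq (φ : R → ℝ) (x : R) :
    ∑ᶠ y ∈ {y | G.Adj x y}, φ y = φ (x - 1) + φ (x + 1) := by
  rw [hG, finsum_mem_pair fun h => h2 (by linear_combination -h)]

theorem lap_eq_of_adj (f : R → ℝ) (x : R) :
    lap G f x = f (x - 1) - 2 * f x + f (x + 1) := by
  rw [lap, finsum_adj_eq hG h2]
  ring

theorem gam_eq_of_adj (f g : R → ℝ) (x : R) :
    gam G f g x = (1/2) * ((f x - f (x - 1)) * (g x - g (x - 1))
      + (f x - f (x + 1)) * (g x - g (x + 1))) := by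
  rw [gam, finsum_adj_eq hG h2]

theorem gam2_eq_of_adj (f : R → ℝ) (x : R) :
    gam2 G f x = (1/4) * ((f (x - 2) - 2 * f (x - 1) + f x) ^ 2
      + 2 * (f (x - 1) - 2 * f x + f (x + 1)) ^ 2 + (f x - 2 * f (x + 1) + f (x + 2)) ^ 2) := by
  have hsub : x - 1 - 1 = x - 2 := by ring
  have hadd : x + 1 + 1 = x + 2 := by ring
  simp only [gam2, lap_eq_of_adj hG h2, gam_eq_of_adj hG h2, sub_add_cancel,
    add_sub_cancel_right, hsub, hadd]
  ring

theorem gam2_nonneg_of_adj (f : R → ℝ) (x : R) : 0 ≤ gam2 G f x := by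
  rw [gam2_eq_of_adj hG h2]
  positivity

theorem gam2_lt_mul_gam_of_eq_intCast {f : R → ℝ} (hf : ∀ k : ℤ, |k| ≤ 2 → f k = k)
    {K : ℝ} (hK : 0 < K) : gam2 G f 0 < K * gam G f f 0 := by
  have hm2 : f (-2) = -2 := by exact_mod_cast hf (-2) (by norm_num)
  have hm1 : f (-1) = -1 := by exact_mod_cast hf (-1) (by norm_num)
  have h0 : f 0 = 0 := by exact_mod_cast hf 0 (by norm_num)
  have h1 : f 1 = 1 := by exact_mod_cast hf 1 (by norm_num)
  have h2' : f 2 = 2 := by exact_mod_cast hf 2 (by norm_num)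
  rw [gam2_eq_of_adj hG h2, gam_eq_of_adj hG h2]
  simp only [zero_sub, zero_add, hm2, hm1, h0, h1, h2']
  linarith

end NeighboursSubOneAddOne

theorem cycleGraph_adj_eq {n : ℕ} [Nontrivial (ZMod n)] (x : ZMod n) :
    {y | (cycleGraph n).Adj x y} = {x - 1, x + 1} := by
  ext y
  change (x ≠ y ∧ (x - y = 1 ∨ y - x = 1)) ↔ y = x - 1 ∨ y = x + 1
  constructor
  · rintro ⟨-, h | h⟩
    · left; linear_combination -h
    · right; linear_combination h
  · rintro (rfl | rfl)
    · exact ⟨fun h => one_ne_zero (by linear_combination h), Or.inl (by ring)⟩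
    · exact ⟨fun h => one_ne_zero (by linear_combination -h), Or.inr (by ring)⟩

theorem pathGraph_adj_eq (x : ℤ) : {y | pathGraph.Adj x y} = {x - 1, x + 1} := by
  ext y
  change (x = y + 1 ∨ y = x + 1) ↔ y = x - 1 ∨ y = x + 1
  omega

theorem ZMod.valMinAbs_intCast_of_two_mul_abs_lt {n : ℕ} {k : ℤ} (hk : 2 * |k| < n) :
    (k : ZMod n).valMinAbs = k := by
  have : NeZero n := ⟨by rintro rfl; simp only [Nat.cast_zero] at hk; linarith [abs_nonneg k]⟩
  rw [ZMod.valMinAbs_spec]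
  refine ⟨rfl, ?_, ?_⟩ <;> cases abs_cases k <;> linarith

/-- `Ric(Cₙ) = 0` for the cycle on `n ≥ 5` vertices, and likewise for the
bi-infinite path `C_∞`: `Γ₂(f)(x) ≥ 0` always, and for every `K > 0` the Bochner
inequality with constant `K` fails for some `f, x`. -/
theorem ric_cycle :
    (∀ n : ℕ, 5 ≤ n →
      ((∀ (f : ZMod n → ℝ) (x : ZMod n), 0 ≤ gam2 (cycleGraph n) f x) ∧
        (∀ K : ℝ, 0 < K → ∃ (f : ZMod n → ℝ) (x : ZMod n),
          gam2 (cycleGraph n) f x < K * gam (cycleGraph n) f f x))) ∧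
    ((∀ (f : ℤ → ℝ) (x : ℤ), 0 ≤ gam2 pathGraph f x) ∧
      (∀ K : ℝ, 0 < K → ∃ (f : ℤ → ℝ) (x : ℤ),
        gam2 pathGraph f x < K * gam pathGraph f f x)) := by
  refine ⟨fun n hn => ?_, gam2_nonneg_of_adj pathGraph_adj_eq two_ne_zero,
    fun K hK => ⟨_, 0, gam2_lt_mul_gam_of_eq_intCast pathGraph_adj_eq two_ne_zero
      (f := fun y => y) (fun _ _ => rfl) hK⟩⟩
  have : Fact (1 < n) := ⟨by omega⟩
  have hval (k : ℤ) (hk : |k| ≤ 2) : (k : ZMod n).valMinAbs = k :=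
    ZMod.valMinAbs_intCast_of_two_mul_abs_lt (by omega)
  have h2 : (2 : ZMod n) ≠ 0 := fun h => by
    have := hval 2 (by norm_num)
    rw [Int.cast_ofNat, h, ZMod.valMinAbs_zero] at this
    omega
  refine ⟨gam2_nonneg_of_adj cycleGraph_adj_eq h2, fun K hK =>
    ⟨_, 0, gam2_lt_mul_gam_of_eq_intCast cycleGraph_adj_eq h2
      (f := fun y => (y.valMinAbs : ℝ)) (fun k hk => by rw [hval k hk]) hK⟩⟩
end
end

section
/- Let ℤ^d be the d-dimensional integer lattice graph (vertices ℤ^d, edges between points at ℓ¹-distance 1). Then Ric(ℤ^d) = 0: Γ₂(f)(x) ≥ 0 for every f:ℤ^d→ℝ and x∈ℤ^d, and for every K > 0 there exist f and x with Γ₂(f)(x) < K·Γ(f)(x). -/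
noncomputable section
open Matrix

/-- The lattice `ℤ^d`: vertices `Fin d → ℤ`, adjacent iff at ℓ¹-distance 1. -/
def latticeGraph (d : ℕ) : SimpleGraph (Fin d → ℤ) where
  Adj x y := ∑ i, |x i - y i| = 1
  symm := by
    constructor
    intro x y h
    simpa [abs_sub_comm] using h
  loopless := by constructor; intro x h; simp at h

/-!
On the Cayley graph of an abelian group `A` with steps `S`, commutativity `x + s + t = x + t + s`
turns `Γ₂` into a sum of squares of second differences:
`Γ₂(f)(x) = ¼ Σ_{s,t ∈ S} (f(x+s+t) - f(x+s) - f(x+t) + f(x))²`, so `Γ₂ ≥ 0`.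
An additive map `φ : A → ℝ`, such as a coordinate of `ℤ^d`, has vanishing second differences,
so `Γ₂(φ) = 0` while `Γ(φ) > 0` as soon as `φ` is nonzero on some step; hence no `K > 0` works.
-/

section CayleyGraph

open Finset

variable {A : Type*} [AddCommGroup A] {G : SimpleGraph A} {S : Finset A}

theorem finsum_adj_eq_sum (hS : ∀ x y, G.Adj x y ↔ y - x ∈ S) (g : A → ℝ) (x : A) :
    ∑ᶠ y ∈ {y | G.Adj x y}, g y = ∑ s ∈ S, g (x + s) := by
  have : {y | G.Adj x y} = (x + ·) '' S := by
    ext y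
    simp [hS, neg_add_eq_sub]
  rw [this, finsum_mem_image (add_right_injective x).injOn, finsum_mem_coe_finset]

theorem lap_eq_sum_s8 (hS : ∀ x y, G.Adj x y ↔ y - x ∈ S) (f : A → ℝ) (x : A) :
    lap G f x = ∑ s ∈ S, (f (x + s) - f x) :=
  finsum_adj_eq_sum hS _ x

theorem gam_eq_sum_s8 (hS : ∀ x y, G.Adj x y ↔ y - x ∈ S) (f g : A → ℝ) (x : A) :
    gam G f g x = (1 / 2) * ∑ s ∈ S, (f x - f (x + s)) * (g x - g (x + s)) := by
  rw [gam, finsum_adj_eq_sum hS (fun y ↦ (f x - f y) * (g x - g y))]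

theorem gam2_eq_sum_sq (hS : ∀ x y, G.Adj x y ↔ y - x ∈ S) (f : A → ℝ) (x : A) :
    gam2 G f x =
      (1 / 4) * ∑ s ∈ S, ∑ t ∈ S, (f (x + s + t) - f (x + s) - f (x + t) + f x) ^ 2 := by
  -- Pairing the inner sum of `Δ Γ(f)` with the outer sum of `Γ(f, Δ f)` makes the identity termwise.
  have hlap : (1 / 2) * lap G (gam G f f) x = ∑ s ∈ S, ∑ t ∈ S,
      (1 / 4) * ((f (x + t) - f (x + s + t)) ^ 2 - (f x - f (x + s)) ^ 2) := by
    rw [sum_comm]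
    simp only [lap_eq_sum_s8 hS, gam_eq_sum_s8 hS, mul_sum, ← sum_sub_distrib]
    refine sum_congr rfl fun t _ ↦ sum_congr rfl fun s _ ↦ ?_
    rw [add_right_comm x t s]
    ring
  have hgam : gam G f (lap G f) x = ∑ s ∈ S, ∑ t ∈ S,
      (1 / 2) * ((f x - f (x + s)) * (f (x + t) - f x - (f (x + s + t) - f (x + s)))) := by
    simp only [lap_eq_sum_s8 hS, gam_eq_sum_s8 hS, mul_sum, ← sum_sub_distrib]
  rw [gam2, hlap, hgam, mul_sum, ← sum_sub_distrib]
  refine sum_congr rfl fun s _ ↦ ?_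
  rw [mul_sum, ← sum_sub_distrib]
  refine sum_congr rfl fun t _ ↦ ?_
  ring

theorem gam2_nonneg (hS : ∀ x y, G.Adj x y ↔ y - x ∈ S) (f : A → ℝ) (x : A) :
    0 ≤ gam2 G f x := by
  rw [gam2_eq_sum_sq hS]
  positivity

theorem gam2_addMonoidHom_eq_zero (hS : ∀ x y, G.Adj x y ↔ y - x ∈ S) (φ : A →+ ℝ) (x : A) :
    gam2 G φ x = 0 := by
  simp [gam2_eq_sum_sq hS]

theorem gam_addMonoidHom_pos (hS : ∀ x y, G.Adj x y ↔ y - x ∈ S) {φ : A →+ ℝ}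
    (hφ : ∃ s ∈ S, φ s ≠ 0) (x : A) : 0 < gam G φ φ x := by
  obtain ⟨s, hs, hφs⟩ := hφ
  rw [gam_eq_sum_s8 hS]
  have : 0 < ∑ t ∈ S, (φ x - φ (x + t)) * (φ x - φ (x + t)) :=
    sum_pos' (fun _ _ ↦ mul_self_nonneg _) ⟨s, hs, by simpa using hφs⟩
  positivity

end CayleyGraph

def latticeSteps (d : ℕ) : Finset (Fin d → ℤ) :=
  (Finset.Icc (-1) 1).filter fun v ↦ ∑ i, |v i| = 1

theorem mem_latticeSteps {d : ℕ} {v : Fin d → ℤ} : v ∈ latticeSteps d ↔ ∑ i, |v i| = 1 := by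
  refine ⟨fun hv ↦ (Finset.mem_filter.1 hv).2, fun hv ↦ Finset.mem_filter.2 ⟨?_, hv⟩⟩
  have hle : ∀ i, |v i| ≤ 1 := fun i ↦
    hv ▸ Finset.single_le_sum (fun j _ ↦ abs_nonneg (v j)) (Finset.mem_univ i)
  exact Finset.mem_Icc.2 ⟨fun i ↦ (abs_le.1 (hle i)).1, fun i ↦ (abs_le.1 (hle i)).2⟩

theorem latticeGraph_adj_iff (d : ℕ) (x y : Fin d → ℤ) :
    (latticeGraph d).Adj x y ↔ y - x ∈ latticeSteps d := by
  simp [latticeGraph, mem_latticeSteps, abs_sub_comm]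

/-- `Ric(ℤ^d) = 0`: `Γ₂(f)(x) ≥ 0` always, and for every `K > 0` the
Bochner inequality with constant `K` fails for some `f, x`. -/
theorem ric_lattice (d : ℕ) (hd : 1 ≤ d) :
    (∀ (f : (Fin d → ℤ) → ℝ) (x : Fin d → ℤ), 0 ≤ gam2 (latticeGraph d) f x) ∧
      (∀ K : ℝ, 0 < K → ∃ (f : (Fin d → ℤ) → ℝ) (x : Fin d → ℤ),
        gam2 (latticeGraph d) f x < K * gam (latticeGraph d) f f x) := by
  have hS := latticeGraph_adj_iff d
  refine ⟨gam2_nonneg hS, fun K hK ↦ ?_⟩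
  let i : Fin d := ⟨0, hd⟩
  let φ : (Fin d → ℤ) →+ ℝ := (Int.castAddHom ℝ).comp (Pi.evalAddMonoidHom _ i)
  have hφ : ∃ s ∈ latticeSteps d, φ s ≠ 0 :=
    ⟨Pi.single i 1, mem_latticeSteps.2 (by simp [Pi.single_apply, apply_ite]), by simp [φ]⟩
  refine ⟨φ, 0, ?_⟩
  rw [gam2_addMonoidHom_eq_zero hS]
  exact mul_pos hK (gam_addMonoidHom_pos hS hφ 0)
end
end

section
/- Let G=(V,E) be a finite graph with Ric(G) ≥ K for some K ∈ ℝ, and let P_t = exp(tΔ) be the heat semigroup. Then for every f:V→ℝ, every t ≥ 0, and every x∈V, Γ(P_t f)(x) ≤ e^{−2Kt} · P_t(Γ(f))(x). -/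
noncomputable section
open Matrix

/-! Bakry–Émery interpolation: for `0 ≤ s ≤ t` put `φ s = e^{-2Ks} P_s(Γ(P_{t-s} f))(x)`.
Differentiating, `φ' s = 2 e^{-2Ks} P_s(Γ₂ - KΓ)(P_{t-s} f)(x)`, which is nonnegative because
`Ric(G) ≥ K` and `P_s` preserves order (the Laplacian matrix has nonnegative off-diagonal
entries). Hence `φ 0 ≤ φ t`, which is the claim. -/

open NormedSpace

namespace Matrix
variable {ι : Type*} [Fintype ι] [DecidableEq ι]

lemma hasDerivAt_exp_smul_apply (L : Matrix ι ι ℝ) (i j : ι) (s : ℝ) :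
    HasDerivAt (fun u : ℝ => exp (u • L) i j) ((exp (s • L) * L) i j) s := by
  let _ : NormedRing (Matrix ι ι ℝ) := Matrix.linftyOpNormedRing
  let _ : NormedAlgebra ℝ (Matrix ι ι ℝ) := Matrix.linftyOpNormedAlgebra
  let entry : Matrix ι ι ℝ →L[ℝ] ℝ :=
    (ContinuousLinearMap.proj (R := ℝ) (φ := fun _ : ι => ℝ) j).comp
      (ContinuousLinearMap.proj (R := ℝ) (φ := fun _ : ι => ι → ℝ) i)
  exact entry.hasFDerivAt.comp_hasDerivAt s (hasDerivAt_exp_smul_const L s)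

lemma exp_apply_nonneg {M : Matrix ι ι ℝ} (hM : ∀ i j, 0 ≤ M i j) (i j : ι) :
    0 ≤ exp M i j := by
  let _ : NormedRing (Matrix ι ι ℝ) := Matrix.linftyOpNormedRing
  let _ : NormedAlgebra ℝ (Matrix ι ι ℝ) := Matrix.linftyOpNormedAlgebra
  have h := Pi.hasSum.mp (Pi.hasSum.mp (exp_series_hasSum_exp' (𝕂 := ℝ) M) i) j
  exact h.nonneg fun n => mul_nonneg (by positivity) (pow_apply_nonneg hM n i j)

lemma exp_smul_one (c : ℝ) : exp (c • (1 : Matrix ι ι ℝ)) = Real.exp c • 1 := by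
  have h : exp (algebraMap ℝ (Matrix ι ι ℝ) c) = algebraMap ℝ (Matrix ι ι ℝ) (exp c) := by
    let _ : NormedRing (Matrix ι ι ℝ) := Matrix.linftyOpNormedRing
    let _ : NormedAlgebra ℝ (Matrix ι ι ℝ) := Matrix.linftyOpNormedAlgebra
    exact (algebraMap_exp_comm c).symm
  rwa [Algebra.algebraMap_eq_smul_one, Algebra.algebraMap_eq_smul_one, ← Real.exp_eq_exp_ℝ] at h

lemma exp_smul_apply_nonneg {L : Matrix ι ι ℝ} (hL : ∀ i j, i ≠ j → 0 ≤ L i j) {s : ℝ}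
    (hs : 0 ≤ s) (i j : ι) : 0 ≤ exp (s • L) i j := by
  -- `L + c • 1` is entrywise nonnegative and the shift only contributes the factor `e^{-sc}`.
  set c := ∑ k, |L k k|
  have hshift : ∀ a b, 0 ≤ (s • (L + c • 1)) a b := by
    intro a b
    rcases eq_or_ne a b with rfl | hab
    · have : -L a a ≤ c := (neg_le_abs _).trans (Finset.single_le_sum (f := fun k => |L k k|)
        (fun _ _ => abs_nonneg _) (Finset.mem_univ a))
      simp only [smul_apply, add_apply, one_apply_eq, smul_eq_mul, mul_one]
      nlinarith
    · simp only [smul_apply, add_apply, one_apply_ne hab, smul_eq_mul, mul_zero, add_zero]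
      exact mul_nonneg hs (hL a b hab)
  have hsplit : s • L = s • (L + c • 1) + (-(s * c)) • 1 := by
    rw [smul_add, smul_smul, add_assoc, ← add_smul]; simp
  rw [hsplit, exp_add_of_commute _ _ ((Commute.one_right _).smul_right _), exp_smul_one,
    mul_smul_comm, mul_one, smul_apply, smul_eq_mul]
  exact mul_nonneg (Real.exp_nonneg _) (exp_apply_nonneg hshift i j)

lemma hasDerivAt_exp_smul_mulVec_apply (L : Matrix ι ι ℝ) {g : ℝ → ι → ℝ} {g' : ι → ℝ}
    {s : ℝ} (hg : ∀ j, HasDerivAt (fun u => g u j) (g' j) s) (i : ι) :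
    HasDerivAt (fun u => (exp (u • L) *ᵥ g u) i) ((exp (s • L) *ᵥ (L *ᵥ g s + g')) i) s := by
  have h := HasDerivAt.fun_sum (u := Finset.univ) fun j _ =>
    (hasDerivAt_exp_smul_apply L i j s).fun_mul (hg j)
  rw [mulVec_add, mulVec_mulVec]
  simpa only [mulVec, dotProduct, Pi.add_apply, Finset.sum_add_distrib] using h

end Matrix

namespace SimpleGraph
variable {V : Type*} [Fintype V] (G : SimpleGraph V)

open Classical in
lemma lap_eq_sum (f : V → ℝ) (x : V) :
    lap G f x = ∑ y ∈ Finset.univ.filter (G.Adj x), (f y - f x) := by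
  rw [lap, ← finsum_mem_coe_finset, Finset.coe_filter_univ]

open Classical in
lemma gam_eq_sum (f g : V → ℝ) (x : V) :
    gam G f g x = (1/2) * ∑ y ∈ Finset.univ.filter (G.Adj x), (f x - f y) * (g x - g y) := by
  rw [gam, ← finsum_mem_coe_finset, Finset.coe_filter_univ]

lemma gam_neg_right (f g : V → ℝ) (x : V) : gam G f (-g) x = -gam G f g x := by
  classical
  simp only [gam_eq_sum, Pi.neg_apply, ← mul_neg, ← Finset.sum_neg_distrib]
  congr 2 with y
  ring

lemma hasDerivAt_gam {a : ℝ → V → ℝ} {a' : V → ℝ} {s : ℝ}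
    (ha : ∀ v, HasDerivAt (fun u => a u v) (a' v) s) (x : V) :
    HasDerivAt (fun u => gam G (a u) (a u) x) (2 * gam G (a s) a' x) s := by
  classical
  simp only [gam_eq_sum]
  refine ((HasDerivAt.fun_sum fun y _ =>
    ((ha x).fun_sub (ha y)).fun_mul ((ha x).fun_sub (ha y))).const_mul (1/2 : ℝ)).congr_deriv ?_
  rw [← mul_assoc, Finset.mul_sum, Finset.mul_sum]
  congr 1 with y
  ring

lemma lapMat_mulVec (f : V → ℝ) : lapMat G *ᵥ f = lap G f := by
  classical
  ext x
  rw [lap_eq_sum]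
  simp only [mulVec, dotProduct, lapMat, of_apply, sub_mul, ite_mul, one_mul, zero_mul]
  rw [Finset.sum_sub_distrib, Finset.sum_sub_distrib, Finset.sum_ite_eq, Finset.sum_const,
    nsmul_eq_mul, ← Finset.sum_filter]
  simp [degC, mul_comm]

lemma lapMat_apply_nonneg {x y : V} (hxy : x ≠ y) : 0 ≤ lapMat G x y := by
  simp only [lapMat, of_apply, if_neg hxy, sub_zero]
  split_ifs <;> norm_num

variable [DecidableEq V]

lemma heat_zero (f : V → ℝ) : heat G 0 f = f := by
  rw [heat, zero_smul, NormedSpace.exp_zero, one_mulVec]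

lemma heat_smul (s c : ℝ) (f : V → ℝ) : heat G s (c • f) = c • heat G s f :=
  mulVec_smul _ c f

lemma heat_lap (s : ℝ) (f : V → ℝ) : heat G s (lap G f) = lap G (heat G s f) := by
  have hcomm : Commute (NormedSpace.exp (s • lapMat G)) (lapMat G) :=
    ((Commute.refl _).smul_left s).exp_left
  rw [heat, heat, ← lapMat_mulVec, ← lapMat_mulVec, mulVec_mulVec, mulVec_mulVec, hcomm.eq]

lemma heat_mono {s : ℝ} (hs : 0 ≤ s) {f g : V → ℝ} (hfg : f ≤ g) (x : V) :
    heat G s f x ≤ heat G s g x :=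
  Finset.sum_le_sum fun y _ => mul_le_mul_of_nonneg_left (hfg y)
    (exp_smul_apply_nonneg (fun _ _ => G.lapMat_apply_nonneg) hs x y)

lemma hasDerivAt_heat {g : ℝ → V → ℝ} {g' : V → ℝ} {s : ℝ}
    (hg : ∀ v, HasDerivAt (fun u => g u v) (g' v) s) (x : V) :
    HasDerivAt (fun u => heat G u (g u) x) (heat G s (lap G (g s) + g') x) s := by
  simpa only [heat, lapMat_mulVec] using (lapMat G).hasDerivAt_exp_smul_mulVec_apply hg x

lemma hasDerivAt_heat_sub (f : V → ℝ) (t s : ℝ) (x : V) :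
    HasDerivAt (fun u => heat G (t - u) f x) (-lap G (heat G (t - s) f) x) s := by
  have hconst := G.hasDerivAt_heat (g := fun _ => f) (g' := 0)
    (fun _ => hasDerivAt_const (t - s) (f _)) x
  have h := hconst.scomp s ((hasDerivAt_id s).const_sub t)
  simpa [Function.comp_def, heat_lap] using h

lemma hasDerivAt_heat_gam_heat_sub (f : V → ℝ) (t s : ℝ) (x : V) :
    HasDerivAt (fun u => heat G u (fun v => gam G (heat G (t - u) f) (heat G (t - u) f) v) x)
      (2 * heat G s (gam2 G (heat G (t - s) f)) x) s := by
  set h := heat G (t - s) f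
  have hgam := G.hasDerivAt_gam (a := fun u => heat G (t - u) f) (a' := -lap G h)
    (fun v => G.hasDerivAt_heat_sub f t s v)
  refine (G.hasDerivAt_heat hgam x).congr_deriv ?_
  have hbochner : lap G (fun v => gam G h h v) + (fun v => 2 * gam G h (-lap G h) v)
      = (2 : ℝ) • gam2 G h := by
    ext v
    simp only [gam_neg_right, gam2, Pi.add_apply, Pi.smul_apply, smul_eq_mul]
    ring
  rw [hbochner, heat_smul, Pi.smul_apply, smul_eq_mul]

lemma monotoneOn_exp_mul_heat_gam_heat_sub {K : ℝ} (hric : RicGE G K) (f : V → ℝ) (t : ℝ)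
    (x : V) :
    MonotoneOn (fun s => Real.exp (-2 * K * s) *
      heat G s (fun v => gam G (heat G (t - s) f) (heat G (t - s) f) v) x) (Set.Ici 0) := by
  have hderiv := fun s => ((hasDerivAt_id s).const_mul (-2 * K)).exp.fun_mul
    (G.hasDerivAt_heat_gam_heat_sub f t s x)
  refine monotoneOn_of_hasDerivWithinAt_nonneg (convex_Ici 0)
    (fun s _ => (hderiv s).continuousAt.continuousWithinAt)
    (fun s _ => (hderiv s).hasDerivWithinAt) fun s hs => ?_
  rw [interior_Ici] at hs
  have hric_heat : K * heat G s (fun v => gam G (heat G (t - s) f) (heat G (t - s) f) v) x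
      ≤ heat G s (gam2 G (heat G (t - s) f)) x := by
    rw [← smul_eq_mul, ← Pi.smul_apply, ← heat_smul]
    exact G.heat_mono hs.le (fun v => hric _ v) x
  have hexp := Real.exp_pos (-2 * K * s)
  simp only [id, mul_one]
  nlinarith

end SimpleGraph

/-- if `Ric(G) ≥ K` then `Γ(P_t f) ≤ e^{-2Kt} P_t(Γ(f))` pointwise,
for all `t ≥ 0`. -/
theorem gamma_heat_estimate {V : Type*} [Fintype V] [DecidableEq V] (G : SimpleGraph V)
    (K : ℝ) (hric : RicGE G K) (f : V → ℝ) (t : ℝ) (ht : 0 ≤ t) (x : V) :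
    gam G (heat G t f) (heat G t f) x
      ≤ Real.exp (-2 * K * t) * heat G t (fun v => gam G f f v) x := by
  have h := G.monotoneOn_exp_mul_heat_gam_heat_sub hric f t x Set.self_mem_Ici ht ht
  simpa only [mul_zero, Real.exp_zero, one_mul, sub_zero, sub_self, G.heat_zero] using h
end
end
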